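/- In the left 𝕆-module 𝕆² (with componentwise scalar multiplication), for x = (x₁,x₂) ∈ 𝕆², the submodule generated by x is all of 𝕆², i.e. ⟨x⟩_𝕆 = 𝕆², if and only if x₁ and x₂ are ℝ-linearly independent in 𝕆; equivalently, x is cyclic if and only if x₁, x₂ are ℝ-linearly dependent. -/

import Mathlib

noncomputable section

open scoped Quaternion

/-- The octonions, realized as pairs of quaternions via the Cayley–Dickson construction. -/
def Octo : Type := ℍ[ℝ] × ℍ[ℝ]

namespace Octo

instance : AddCommGroup Octo := inferInstanceAs (AddCommGroup (ℍ[ℝ] × ℍ[ℝ]))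
instance : Module ℝ Octo := inferInstanceAs (Module ℝ (ℍ[ℝ] × ℍ[ℝ]))

/-- Build an octonion from a pair of quaternions. -/
def mk (a b : ℍ[ℝ]) : Octo := (a, b)

/-- First quaternion component. -/
def p1 (x : Octo) : ℍ[ℝ] := (show ℍ[ℝ] × ℍ[ℝ] from x).1

/-- Second quaternion component. -/
def p2 (x : Octo) : ℍ[ℝ] := (show ℍ[ℝ] × ℍ[ℝ] from x).2

/-- Cayley–Dickson multiplication: `(a,b)(c,d) = (ac − d̄b, da + bc̄)`. -/
instance : Mul Octo :=
  ⟨fun x y => mk (p1 x * p1 y - star (p2 y) * p2 x) (p2 y * p1 x + p2 x * star (p1 y))⟩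

instance : One Octo := ⟨mk 1 0⟩

/-- Octonion conjugation: for `x = (a,b)`, `x̄ = (ā, −b)`. -/
def conj (x : Octo) : Octo := mk (star (p1 x)) (-(p2 x))

/-- The octonion associator `[x,y,z] = (xy)z − x(yz)`. -/
def assoc (x y z : Octo) : Octo := x * y * z - x * (y * z)

/-- The octonion commutator `[x,y] = xy − yx`. -/
def comm (x y : Octo) : Octo := x * y - y * x

/-- The canonical embedding of the reals into the octonions. -/
def ofReal (r : ℝ) : Octo := r • (1 : Octo)

end Octo

section OMod

variable {M : Type*} [AddCommGroup M] [Module ℝ M]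
variable {N : Type*} [AddCommGroup N] [Module ℝ N]

/-- `IsOMod sm` says that the scalar multiplication `sm : 𝕆 × M → M` makes the real vector
space `M` a left 𝕆-module: `sm` is ℝ-bilinear, unital, and the left associator is
alternating in its two octonion arguments. -/
structure IsOMod (sm : Octo → M → M) : Prop where
  smul_add : ∀ (p : Octo) (m n : M), sm p (m + n) = sm p m + sm p n
  add_smul : ∀ (p q : Octo) (m : M), sm (p + q) m = sm p m + sm q m
  real_smul : ∀ (r : ℝ) (p : Octo) (m : M), sm (r • p) m = r • sm p m
  smul_real : ∀ (r : ℝ) (p : Octo) (m : M), sm p (r • m) = r • sm p m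
  one_smul : ∀ m : M, sm 1 m = m
  alt : ∀ (p q : Octo) (m : M),
    sm (p * q) m - sm p (sm q m) = -(sm (q * p) m - sm q (sm p m))

/-- The left associator `[p,q,m] = (pq)m − p(qm)`. -/
def oLassoc (sm : Octo → M → M) (p q : Octo) (m : M) : M :=
  sm (p * q) m - sm p (sm q m)

/-- The set `𝒜(M)` of associative elements: `[p,q,m] = 0` for all `p,q ∈ 𝕆`. -/
def assocSet (sm : Octo → M → M) : Set M :=
  {m | ∀ p q : Octo, oLassoc sm p q m = 0}

/-- The set `𝒜⁻(M)` of conjugate associative elements: `(pq)m = q(pm)` for all `p,q ∈ 𝕆`. -/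
def conjAssocSet (sm : Octo → M → M) : Set M :=
  {m | ∀ p q : Octo, sm (p * q) m = sm q (sm p m)}

/-- A homomorphism of left 𝕆-modules: an ℝ-linear map commuting with 𝕆-scalar
multiplication. -/
def IsOHom (sm : Octo → M → M) (sm' : Octo → N → N) (f : M → N) : Prop :=
  IsLinearMap ℝ f ∧ ∀ (p : Octo) (m : M), f (sm p m) = sm' p (f m)

/-- Two left 𝕆-modules are isomorphic if there is a bijective homomorphism between them. -/
def OIso (sm : Octo → M → M) (sm' : Octo → N → N) : Prop :=
  ∃ f : M → N, IsOHom sm sm' f ∧ Function.Bijective f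

/-- A submodule: a real subspace closed under 𝕆-scalar multiplication. -/
structure IsOSubmodule (sm : Octo → M → M) (S : Set M) : Prop where
  zero_mem : (0 : M) ∈ S
  add_mem : ∀ {x y : M}, x ∈ S → y ∈ S → x + y ∈ S
  smul_mem : ∀ (r : ℝ) {x : M}, x ∈ S → r • x ∈ S
  osmul_mem : ∀ (p : Octo) {x : M}, x ∈ S → sm p x ∈ S

/-- `⟨m⟩_𝕆`, the smallest submodule containing `m`, as a set. -/
def genSet (sm : Octo → M → M) (m : M) : Set M :=
  ⋂₀ {S : Set M | IsOSubmodule sm S ∧ m ∈ S}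

/-- An element `m` is cyclic if `⟨m⟩_𝕆 = 𝕆m`. -/
def IsOCyclic (sm : Octo → M → M) (m : M) : Prop :=
  genSet sm m = {x | ∃ p : Octo, x = sm p m}

/-- 𝕆-linear independence of a subset `S ⊆ M`: any finite 𝕆-linear combination of
distinct elements of `S` that vanishes has all coefficients zero. -/
def OLinIndep (sm : Octo → M → M) (S : Set M) : Prop :=
  ∀ (n : ℕ) (s : Fin n → M) (r : Fin n → Octo), Function.Injective s → (∀ i, s i ∈ S) →
    (∑ i, sm (r i) (s i)) = 0 → ∀ i, r i = 0

end OMod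

/-- The canonical left 𝕆-module structure on 𝕆 itself. -/
def oSmul : Octo → Octo → Octo := fun p x => p * x

/-- The left 𝕆-module structure `𝕆̄` on 𝕆: `p ·̂ x = p̄x`. -/
def oBarSmul : Octo → Octo → Octo := fun p x => Octo.conj p * x

/-- The componentwise left 𝕆-module structure on `𝕆²`. -/
def sm2 : Octo → Octo × Octo → Octo × Octo := fun p x => (p * x.1, p * x.2)

/-! If `x₁, x₂` are dependent, then `x = (a u, b u)` with `a, b` real, and since right
multiplication by `u ≠ 0` is onto, `𝕆x = {(a v, b v)}`, which is already a submodule.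
If they are independent, let `G = ⟨x⟩_𝕆`. When `G` meets `0 × 𝕆` nontrivially it contains
`0 × 𝕆` and hence `𝕆 × 0`, because a nonzero left ideal of `𝕆` is all of `𝕆`. Otherwise `G` is
the graph of a map; it contains some `(1, c)`, hence every `(q, qc)`, and comparing `p(q, qc)`
with `(pq, (pq)c)` puts `c` in the nucleus `ℝ`, so `x₂ = c x₁`. Finally `𝕆x ≠ 𝕆²`: it cannot
contain both `(1, 0)` and `(1, 1)`, as `p ↦ p x₁` is injective for `x₁ ≠ 0`. So "cyclic" and
"generates `𝕆²`" exclude each other. -/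

lemma exists_eq_smul_of_not_linearIndependent {K V : Type*} [Field K] [AddCommGroup V]
    [Module K V] {v w : V} (h : ¬ LinearIndependent K ![v, w]) :
    ∃ (u : V) (a b : K), v = a • u ∧ w = b • u := by
  rw [linearIndependent_fin2] at h
  push Not at h
  simp only [Matrix.cons_val_one, Matrix.cons_val_zero] at h
  by_cases hw : w = 0
  · exact ⟨v, 1, 0, by simp [hw]⟩
  · obtain ⟨a, ha⟩ := h hw
    exact ⟨w, a, 1, ha.symm, by simp⟩

lemma Quaternion.coe_re_eq_of_forall_mul_comm {a : ℍ[ℝ]} (h : ∀ v : ℍ[ℝ], v * a = a * v) :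
    ((a.re : ℝ) : ℍ[ℝ]) = a := by
  set i : ℍ[ℝ] := ⟨0, 1, 0, 0⟩ with hi_def
  set j : ℍ[ℝ] := ⟨0, 0, 1, 0⟩ with hj_def
  have hi := Quaternion.ext_iff.1 (h i)
  have hj := Quaternion.ext_iff.1 (h j)
  simp only [Quaternion.re_mul, Quaternion.imI_mul, Quaternion.imJ_mul, Quaternion.imK_mul] at hi hj
  simp only [hi_def, hj_def, zero_mul, one_mul, zero_sub, sub_zero, mul_zero, mul_one, zero_add,
    add_zero, sub_self, true_and] at hi hj
  ext <;> simp <;> linarith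

lemma Quaternion.exists_mul_ne_mul : ∃ u v : ℍ[ℝ], u * v ≠ v * u := by
  set i : ℍ[ℝ] := ⟨0, 1, 0, 0⟩ with hi_def
  set j : ℍ[ℝ] := ⟨0, 0, 1, 0⟩ with hj_def
  refine ⟨i, j, fun h => ?_⟩
  have := congrArg (fun q : ℍ[ℝ] => q.imK) h
  simp only [Quaternion.imK_mul] at this
  norm_num [hi_def, hj_def] at this

namespace Octo

@[ext] lemma ext {x y : Octo} (h1 : p1 x = p1 y) (h2 : p2 x = p2 y) : x = y := Prod.ext h1 h2

@[simp] lemma p1_mul (x y : Octo) : p1 (x * y) = p1 x * p1 y - star (p2 y) * p2 x := rfl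
@[simp] lemma p2_mul (x y : Octo) : p2 (x * y) = p2 y * p1 x + p2 x * star (p1 y) := rfl
@[simp] lemma p1_mk (a b : ℍ[ℝ]) : p1 (mk a b) = a := rfl
@[simp] lemma p2_mk (a b : ℍ[ℝ]) : p2 (mk a b) = b := rfl
@[simp] lemma p1_add (x y : Octo) : p1 (x + y) = p1 x + p1 y := rfl
@[simp] lemma p2_add (x y : Octo) : p2 (x + y) = p2 x + p2 y := rfl
@[simp] lemma p1_smul (r : ℝ) (x : Octo) : p1 (r • x) = r • p1 x := rfl
@[simp] lemma p2_smul (r : ℝ) (x : Octo) : p2 (r • x) = r • p2 x := rfl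
@[simp] lemma p1_zero : p1 0 = 0 := rfl
@[simp] lemma p2_zero : p2 0 = 0 := rfl
@[simp] lemma p1_one : p1 1 = 1 := rfl
@[simp] lemma p2_one : p2 1 = 0 := rfl
@[simp] lemma p1_conj (x : Octo) : p1 (conj x) = star (p1 x) := rfl
@[simp] lemma p2_conj (x : Octo) : p2 (conj x) = -p2 x := rfl

-- Scoped, so that elsewhere the additive structure of `Octo` is still found through its own
-- `AddCommGroup` instance.
scoped instance : NonAssocRing Octo where
  left_distrib x y z := by
    apply ext <;> simp only [p1_mul, p2_mul, p1_add, p2_add, star_add] <;> noncomm_ring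
  right_distrib x y z := by
    apply ext <;> simp only [p1_mul, p2_mul, p1_add, p2_add] <;> noncomm_ring
  zero_mul x := by ext <;> simp
  mul_zero x := by ext <;> simp
  one_mul x := by ext <;> simp
  mul_one x := by ext <;> simp

scoped instance : IsScalarTower ℝ Octo Octo :=
  ⟨fun r x y => by ext <;> simp [smul_sub, smul_add]⟩

scoped instance : SMulCommClass ℝ Octo Octo :=
  ⟨fun r x y => by ext <;> simp [smul_sub, smul_add]⟩

instance : Nontrivial Octo := ⟨⟨0, 1, fun h => zero_ne_one (congrArg p1 h)⟩⟩

instance : FiniteDimensional ℝ Octo := inferInstanceAs (FiniteDimensional ℝ (ℍ[ℝ] × ℍ[ℝ]))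

def normSq (x : Octo) : ℝ := Quaternion.normSq (p1 x) + Quaternion.normSq (p2 x)

lemma normSq_ne_zero {x : Octo} (hx : x ≠ 0) : normSq x ≠ 0 := by
  contrapose! hx
  rw [normSq, add_eq_zero_iff_of_nonneg Quaternion.normSq_nonneg Quaternion.normSq_nonneg] at hx
  exact ext (Quaternion.normSq_eq_zero.1 hx.1) (Quaternion.normSq_eq_zero.1 hx.2)

lemma mul_mul_conj (x u : Octo) : x * u * conj u = normSq u • x := by
  set a := p1 x; set b := p2 x; set c := p1 u; set d := p2 u
  have hc : c * star c = ((Quaternion.normSq c : ℝ) : ℍ[ℝ]) := Quaternion.self_mul_star c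
  have hd : d * star d = ((Quaternion.normSq d : ℝ) : ℍ[ℝ]) := Quaternion.self_mul_star d
  have hd' : star d * d = ((Quaternion.normSq d : ℝ) : ℍ[ℝ]) := Quaternion.star_mul_self d
  have hc' : star c * c = ((Quaternion.normSq c : ℝ) : ℍ[ℝ]) := Quaternion.star_mul_self c
  apply ext
  · calc p1 (x * u * conj u)
        _ = a * (c * star c) + (star d * d) * a := by
          simp only [p1_mul, p1_conj, p2_conj, star_neg, p2_mul, neg_mul, sub_neg_eq_add]
          noncomm_ring
        _ = p1 (normSq u • x) := by
          rw [hc, hd', Quaternion.mul_coe_eq_smul, Quaternion.coe_mul_eq_smul, ← add_smul]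
          rfl
  · calc p2 (x * u * conj u)
        _ = (d * star d) * b + b * (star c * c) := by
          simp only [p2_mul, p2_conj, p1_mul, neg_mul, p1_conj, star_star]
          noncomm_ring
        _ = p2 (normSq u • x) := by
          rw [hc', hd, Quaternion.mul_coe_eq_smul, Quaternion.coe_mul_eq_smul, ← add_smul, add_comm]
          rfl

lemma mul_left_injective₀ {u : Octo} (hu : u ≠ 0) : Function.Injective fun p : Octo => p * u := by
  intro p p' h
  have h0 : (p - p') * u * conj u = 0 := by simp only [sub_mul, sub_eq_zero.2 h, zero_mul]
  rw [mul_mul_conj, smul_eq_zero] at h0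
  exact sub_eq_zero.1 (h0.resolve_left (normSq_ne_zero hu))

lemma mul_left_surjective₀ {u : Octo} (hu : u ≠ 0) : Function.Surjective fun p : Octo => p * u :=
  (LinearMap.injective_iff_surjective (f := LinearMap.mulRight ℝ u)).1 (mul_left_injective₀ hu)

lemma exists_mul_eq_mul_mul (q p u : Octo) : ∃ p' : Octo, p' * u = q * (p * u) := by
  rcases eq_or_ne u 0 with rfl | hu
  · exact ⟨0, by simp⟩
  · exact mul_left_surjective₀ hu _

lemma eq_smul_one_of_forall_mul_assoc {c : Octo} (h : ∀ p q : Octo, p * q * c = p * (q * c)) :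
    ∃ r : ℝ, c = r • 1 := by
  have hb : p2 c = 0 := by
    obtain ⟨u, v, huv⟩ := Quaternion.exists_mul_ne_mul
    have e := congrArg p2 (h (mk u 0) (mk v 0))
    simp only [p1_mul, p2_mul, p1_mk, p2_mk, star_zero, zero_mul, mul_zero, add_zero, sub_zero] at e
    by_contra hb
    exact huv (mul_left_cancel₀ hb (by rw [e, mul_assoc]))
  have ha : ∀ v : ℍ[ℝ], v * p1 c = p1 c * v := by
    intro v
    have e := congrArg p2 (h (mk 0 1) (mk v 0))
    simp only [p1_mul, p2_mul, p1_mk, p2_mk, hb, star_zero, zero_mul, mul_zero,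
      one_mul, sub_zero, zero_add, add_zero, ← star_mul] at e
    exact star_injective e.symm
  refine ⟨(p1 c).re, ext ?_ (by simp [hb])⟩
  rw [p1_smul, p1_one, ← Algebra.algebraMap_eq_smul_one]
  exact (Quaternion.coe_re_eq_of_forall_mul_comm ha).symm

end Octo

section GenSet

variable {M N : Type*} [AddCommGroup M] [Module ℝ M] [AddCommGroup N] [Module ℝ N]
  {sm : Octo → M → M}

lemma mem_genSet {m x : M} :
    x ∈ genSet sm m ↔ ∀ S : Set M, IsOSubmodule sm S → m ∈ S → x ∈ S := by
  simp [genSet, and_imp]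

lemma genSet_subset {m : M} {S : Set M} (hS : IsOSubmodule sm S) (hm : m ∈ S) :
    genSet sm m ⊆ S :=
  fun _ hx => mem_genSet.1 hx S hS hm

lemma mem_genSet_self (m : M) : m ∈ genSet sm m :=
  mem_genSet.2 fun _ _ hm => hm

lemma isOSubmodule_genSet (sm : Octo → M → M) (m : M) : IsOSubmodule sm (genSet sm m) where
  zero_mem := mem_genSet.2 fun _ hS _ => hS.zero_mem
  add_mem hx hy := mem_genSet.2 fun S hS hm =>
    hS.add_mem (mem_genSet.1 hx S hS hm) (mem_genSet.1 hy S hS hm)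
  smul_mem r _ hx := mem_genSet.2 fun S hS hm => hS.smul_mem r (mem_genSet.1 hx S hS hm)
  osmul_mem p _ hx := mem_genSet.2 fun S hS hm => hS.osmul_mem p (mem_genSet.1 hx S hS hm)

lemma IsOSubmodule.sub_mem {S : Set M} (hS : IsOSubmodule sm S) {x y : M} (hx : x ∈ S)
    (hy : y ∈ S) : x - y ∈ S := by
  simpa [sub_eq_add_neg] using hS.add_mem hx (hS.smul_mem (-1) hy)

lemma IsOSubmodule.preimage {sm' : Octo → N → N} {f : M → N} (hf : IsOHom sm sm' f)
    {S : Set N} (hS : IsOSubmodule sm' S) : IsOSubmodule sm (f ⁻¹' S) where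
  zero_mem := by simpa [Set.mem_preimage, hf.1.map_zero] using hS.zero_mem
  add_mem hx hy := by simpa [Set.mem_preimage, hf.1.map_add] using hS.add_mem hx hy
  smul_mem r _ hx := by simpa [Set.mem_preimage, hf.1.map_smul] using hS.smul_mem r hx
  osmul_mem p _ hx := by simpa [Set.mem_preimage, hf.2] using hS.osmul_mem p hx

lemma isOCyclic_of_isOSubmodule {m : M} (h1 : sm 1 m = m)
    (h : IsOSubmodule sm {x | ∃ p, x = sm p m}) : IsOCyclic sm m :=
  (genSet_subset h ⟨1, h1.symm⟩).antisymm fun _ ⟨p, hp⟩ =>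
    hp ▸ (isOSubmodule_genSet sm m).osmul_mem p (mem_genSet_self m)

end GenSet

section

open scoped Octo

lemma eq_univ_of_isOSubmodule_oSmul {S : Set Octo} (hS : IsOSubmodule oSmul S) {y : Octo}
    (hy : y ≠ 0) (hyS : y ∈ S) : S = Set.univ :=
  Set.eq_univ_of_forall fun z => by
    obtain ⟨p, rfl⟩ := Octo.mul_left_surjective₀ hy z
    exact hS.osmul_mem p hyS

lemma isOHom_inl : IsOHom oSmul sm2 fun y => (y, 0) :=
  ⟨⟨fun _ _ => by simp, fun _ _ => by simp⟩, fun p y => by simp [oSmul, sm2]⟩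

lemma isOHom_inr : IsOHom oSmul sm2 fun y => (0, y) :=
  ⟨⟨fun _ _ => by simp, fun _ _ => by simp⟩, fun p y => by simp [oSmul, sm2]⟩

namespace IsOSubmodule

lemma eq_univ_of_mem_inr {G : Set (Octo × Octo)} (hG : IsOSubmodule sm2 G) {x : Octo × Octo}
    (hx : x ∈ G) (hx1 : x.1 ≠ 0) {y : Octo} (hy : y ≠ 0) (hyG : (0, y) ∈ G) : G = Set.univ := by
  have hinr : ∀ z, (0, z) ∈ G := Set.eq_univ_iff_forall.1
    (eq_univ_of_isOSubmodule_oSmul (hG.preimage isOHom_inr) hy hyG)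
  have hx1G : (x.1, 0) ∈ G := by
    convert hG.sub_mem hx (hinr x.2) using 1
    ext <;> simp
  have hinl : ∀ z, (z, 0) ∈ G := Set.eq_univ_iff_forall.1
    (eq_univ_of_isOSubmodule_oSmul (hG.preimage isOHom_inl) hx1 hx1G)
  exact Set.eq_univ_of_forall fun z => by simpa using hG.add_mem (hinl z.1) (hinr z.2)

lemma exists_snd_eq_smul_fst {G : Set (Octo × Octo)} (hG : IsOSubmodule sm2 G)
    (hinr : ∀ y, (0, y) ∈ G → y = 0) {x : Octo × Octo} (hx : x ∈ G) (hx1 : x.1 ≠ 0) :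
    ∃ r : ℝ, x.2 = r • x.1 := by
  have hfun : ∀ {y z z'}, (y, z) ∈ G → (y, z') ∈ G → z = z' := fun h h' =>
    sub_eq_zero.1 (hinr _ (by simpa using hG.sub_mem h h'))
  obtain ⟨p₀, hp₀⟩ := Octo.mul_left_surjective₀ hx1 1
  have hmem : ∀ q, (q, q * (p₀ * x.2)) ∈ G := fun q => by
    simpa [sm2, hp₀] using hG.osmul_mem q (hG.osmul_mem p₀ hx)
  obtain ⟨r, hr⟩ := Octo.eq_smul_one_of_forall_mul_assoc fun p q =>
    hfun (hmem (p * q)) (hG.osmul_mem p (hmem q))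
  exact ⟨r, hfun hx (by simpa [hr] using hmem x.1)⟩

end IsOSubmodule

lemma genSet_sm2_eq_univ {x : Octo × Octo} (hx : LinearIndependent ℝ ![x.1, x.2]) :
    genSet sm2 x = Set.univ := by
  have hG := isOSubmodule_genSet sm2 x
  have hx1 : x.1 ≠ 0 := by simpa using hx.ne_zero 0
  by_cases hinr : ∀ y, (0, y) ∈ genSet sm2 x → y = 0
  · obtain ⟨r, hr⟩ := hG.exists_snd_eq_smul_fst hinr (mem_genSet_self x) hx1
    have := LinearIndependent.pair_iff.1 hx r (-1) (by simp [hr])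
    norm_num at this
  · push Not at hinr
    obtain ⟨y, hyG, hy⟩ := hinr
    exact hG.eq_univ_of_mem_inr (mem_genSet_self x) hx1 hy hyG

lemma isOCyclic_sm2_smul_smul (u : Octo) (a b : ℝ) : IsOCyclic sm2 (a • u, b • u) := by
  refine isOCyclic_of_isOSubmodule (by simp [sm2]) ⟨⟨0, by ext <;> simp [sm2]⟩, ?_, ?_, ?_⟩
  · rintro _ _ ⟨p, rfl⟩ ⟨q, rfl⟩
    exact ⟨p + q, by simp [sm2, add_mul]⟩
  · rintro r _ ⟨p, rfl⟩
    exact ⟨r • p, by simp [sm2, smul_mul_assoc]⟩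
  · rintro q _ ⟨p, rfl⟩
    obtain ⟨p', hp'⟩ := Octo.exists_mul_eq_mul_mul q p u
    exact ⟨p', by simp [sm2, mul_smul_comm, hp']⟩

lemma setOf_sm2_ne_univ (x : Octo × Octo) : {z | ∃ p, z = sm2 p x} ≠ Set.univ := by
  intro h
  obtain ⟨p, hp⟩ : ((1, 0) : Octo × Octo) ∈ {z | ∃ p, z = sm2 p x} := h ▸ trivial
  obtain ⟨p', hp'⟩ : ((1, 1) : Octo × Octo) ∈ {z | ∃ p, z = sm2 p x} := h ▸ trivial
  simp only [sm2, Prod.mk.injEq] at hp hp'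
  have hx1 : x.1 ≠ 0 := fun h0 => by simp [h0] at hp
  obtain rfl : p = p' := Octo.mul_left_injective₀ hx1 (hp.1.symm.trans hp'.1)
  exact zero_ne_one (hp.2.trans hp'.2.symm)

end

/-- In `𝕆²`, `⟨x⟩_𝕆 = 𝕆²` iff `x₁, x₂` are ℝ-linearly independent;
equivalently `x` is cyclic iff `x₁, x₂` are ℝ-linearly dependent. -/
theorem stmt18 (x : Octo × Octo) :
    (genSet sm2 x = Set.univ ↔ LinearIndependent ℝ ![x.1, x.2]) ∧
    (IsOCyclic sm2 x ↔ ¬ LinearIndependent ℝ ![x.1, x.2]) := by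
  have not_cyclic_and_univ : ¬ (IsOCyclic sm2 x ∧ genSet sm2 x = Set.univ) :=
    fun ⟨hc, hu⟩ => setOf_sm2_ne_univ x (hc ▸ hu)
  have cyclic_of_dep (h : ¬ LinearIndependent ℝ ![x.1, x.2]) : IsOCyclic sm2 x := by
    obtain ⟨u, a, b, h1, h2⟩ := exists_eq_smul_of_not_linearIndependent h
    rw [← Prod.mk.eta (p := x), h1, h2]
    exact isOCyclic_sm2_smul_smul u a b
  refine ⟨⟨fun hu => ?_, genSet_sm2_eq_univ⟩,
    ⟨fun hc hx => not_cyclic_and_univ ⟨hc, genSet_sm2_eq_univ hx⟩, cyclic_of_dep⟩⟩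
  by_contra hx
  exact not_cyclic_and_univ ⟨cyclic_of_dep hx, hu⟩
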